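/- arXiv:1104.5656 — 3 statements merged into one kernel-verified Lean document; each statement's English description precedes it below -/
import Mathlib

section
/- Let 0 < α < π/2 and 0 < r < 1 with sin α ≤ r ≤ cos α, and let ρ := √(1 - r²). Suppose C ⊆ R^n is compact with rB^n ⊆ C ⊆ B^n, and v, w are nonzero vectors making angle α. Then slos(v,w) ≤ 2ρ sin α / (r(1 + cos α) + ρ sin α). -/
open scoped RealInnerProductSpace

noncomputable def maxC {n : ℕ} (C : Set (EuclideanSpace ℝ (Fin n)))
    (v : EuclideanSpace ℝ (Fin n)) : ℝ :=
  sSup ((fun x => ⟪v, x⟫) '' C)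

noncomputable def minC {n : ℕ} (C : Set (EuclideanSpace ℝ (Fin n)))
    (v : EuclideanSpace ℝ (Fin n)) : ℝ :=
  sInf ((fun x => ⟪v, x⟫) '' C)

noncomputable def ranC {n : ℕ} (C : Set (EuclideanSpace ℝ (Fin n)))
    (v : EuclideanSpace ℝ (Fin n)) : ℝ :=
  maxC C v - minC C v

noncomputable def losC {n : ℕ} (C : Set (EuclideanSpace ℝ (Fin n)))
    (v w : EuclideanSpace ℝ (Fin n)) : ℝ :=
  maxC C w - sInf ((fun x => ⟪w, x⟫) '' {x ∈ C | ⟪v, x⟫ = maxC C v})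

noncomputable def slosC {n : ℕ} (C : Set (EuclideanSpace ℝ (Fin n)))
    (v w : EuclideanSpace ℝ (Fin n)) : ℝ :=
  losC C v w / ranC C w

/-!
Scale `v`, `w` to unit vectors, so that `⟪v, w⟫ = cos α`, and let `t = max(v) ∈ [r, 1]`.
Cauchy–Schwarz applied to the components of `w` and `x` orthogonal to `v` gives
`|⟪w, x⟫ - cos α ⟪v, x⟫| ≤ sin α √(1 - ⟪v, x⟫²)` on the unit ball. On the face `⟪v, x⟫ = t`
this bounds `⟪w, x⟫` below by `f = t cos α - √(1 - t²) sin α`, and `rBⁿ ⊆ C` gives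
`ran(w) ≥ max(w) + r`, so `slos(v, w) ≤ (max(w) - f) / (max(w) + r)`, which increases with
`max(w)`. If `t ≥ cos α` we use `max(w) ≤ 1`; otherwise, as
`cos α p + sin α √(1 - p²) = cos (arccos p - α)` increases for `p ≤ cos α`, even
`max(w) ≤ t cos α + √(1 - t²) sin α`. Elementary inequalities finish both cases.
-/

section Scaling

variable {n : ℕ} (C : Set (EuclideanSpace ℝ (Fin n))) (v w : EuclideanSpace ℝ (Fin n))

open scoped Pointwise in
lemma image_inner_smul_left (a : ℝ) (S : Set (EuclideanSpace ℝ (Fin n))) :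
    (fun x => ⟪a • v, x⟫) '' S = a • ((fun x => ⟪v, x⟫) '' S) := by
  rw [← Set.image_smul, Set.image_image]
  simp only [real_inner_smul_left, smul_eq_mul]

lemma sSup_image_inner_smul_left {a : ℝ} (ha : 0 ≤ a)
    (S : Set (EuclideanSpace ℝ (Fin n))) :
    sSup ((fun x => ⟪a • v, x⟫) '' S) = a * sSup ((fun x => ⟪v, x⟫) '' S) := by
  rw [image_inner_smul_left, Real.sSup_smul_of_nonneg ha, smul_eq_mul]

lemma sInf_image_inner_smul_left {a : ℝ} (ha : 0 ≤ a)
    (S : Set (EuclideanSpace ℝ (Fin n))) :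
    sInf ((fun x => ⟪a • v, x⟫) '' S) = a * sInf ((fun x => ⟪v, x⟫) '' S) := by
  rw [image_inner_smul_left, Real.sInf_smul_of_nonneg ha, smul_eq_mul]

lemma maxC_smul {a : ℝ} (ha : 0 ≤ a) : maxC C (a • v) = a * maxC C v :=
  sSup_image_inner_smul_left v ha C

lemma ranC_smul {a : ℝ} (ha : 0 ≤ a) : ranC C (a • v) = a * ranC C v := by
  rw [ranC, ranC, minC, minC, maxC_smul C v ha, sInf_image_inner_smul_left v ha, mul_sub]

lemma losC_smul {a b : ℝ} (ha : 0 < a) (hb : 0 ≤ b) :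
    losC C (a • v) (b • w) = b * losC C v w := by
  have hface : {x ∈ C | ⟪a • v, x⟫ = maxC C (a • v)} = {x ∈ C | ⟪v, x⟫ = maxC C v} := by
    ext x
    simp only [Set.mem_sep_iff, real_inner_smul_left, maxC_smul C v ha.le,
      mul_right_inj' ha.ne']
  rw [losC, losC, hface, maxC_smul C w hb, sInf_image_inner_smul_left w hb, mul_sub]

lemma slosC_smul {a b : ℝ} (ha : 0 < a) (hb : 0 < b) :
    slosC C (a • v) (b • w) = slosC C v w := by
  rw [slosC, slosC, losC_smul C v w ha hb.le, ranC_smul C w hb.le,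
    mul_div_mul_left _ _ hb.ne']

end Scaling

section Compact

variable {n : ℕ} {C : Set (EuclideanSpace ℝ (Fin n))} {u v w x : EuclideanSpace ℝ (Fin n)}

lemma inner_le_maxC (hC : IsCompact C) (hx : x ∈ C) : ⟪u, x⟫ ≤ maxC C u :=
  le_csSup (hC.image (continuous_const.inner continuous_id)).bddAbove ⟨x, hx, rfl⟩

lemma minC_le_inner (hC : IsCompact C) (hx : x ∈ C) : minC C u ≤ ⟪u, x⟫ :=
  csInf_le (hC.image (continuous_const.inner continuous_id)).bddBelow ⟨x, hx, rfl⟩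

lemma maxC_le {b : ℝ} (hne : C.Nonempty) (h : ∀ x ∈ C, ⟪u, x⟫ ≤ b) : maxC C u ≤ b :=
  csSup_le (hne.image _) (Set.forall_mem_image.2 h)

lemma exists_inner_eq_maxC (hC : IsCompact C) (hne : C.Nonempty) :
    ∃ x ∈ C, ⟪u, x⟫ = maxC C u :=
  (hC.image (continuous_const.inner continuous_id)).sSup_mem (hne.image _)

lemma losC_le {b : ℝ} (hC : IsCompact C) (hne : C.Nonempty)
    (h : ∀ x ∈ C, ⟪v, x⟫ = maxC C v → b ≤ ⟪w, x⟫) : losC C v w ≤ maxC C w - b := by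
  obtain ⟨x₀, hx₀, hx₀v⟩ := exists_inner_eq_maxC (u := v) hC hne
  have hb : b ≤ sInf ((fun x => ⟪w, x⟫) '' {x ∈ C | ⟪v, x⟫ = maxC C v}) :=
    le_csInf ⟨_, x₀, ⟨hx₀, hx₀v⟩, rfl⟩ (Set.forall_mem_image.2 fun x hx => h x hx.1 hx.2)
  rw [losC]
  linarith

lemma slosC_le_of_face_bound {f r : ℝ} (hC : IsCompact C) (hne : C.Nonempty)
    (hface : ∀ x ∈ C, ⟪v, x⟫ = maxC C v → f ≤ ⟪w, x⟫) (hmin : minC C w ≤ -r)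
    (hpos : 0 < maxC C w + r) :
    slosC C v w ≤ (maxC C w - f) / (maxC C w + r) := by
  obtain ⟨x₀, hx₀, hx₀v⟩ := exists_inner_eq_maxC (u := v) hC hne
  have hfM : f ≤ maxC C w := (hface x₀ hx₀ hx₀v).trans (inner_le_maxC hC hx₀)
  have hran : maxC C w + r ≤ ranC C w := by rw [ranC]; linarith
  calc slosC C v w ≤ (maxC C w - f) / ranC C w :=
        div_le_div_of_nonneg_right (losC_le hC hne hface) (by linarith)
    _ ≤ (maxC C w - f) / (maxC C w + r) :=
        div_le_div_of_nonneg_left (by linarith) hpos hran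

lemma maxC_le_norm (hne : C.Nonempty) (hC1 : C ⊆ Metric.closedBall 0 1) : maxC C u ≤ ‖u‖ :=
  maxC_le hne fun x hx => (real_inner_le_norm u x).trans
    (mul_le_of_le_one_right (norm_nonneg u) (mem_closedBall_zero_iff.1 (hC1 hx)))

variable {r : ℝ}

lemma le_maxC_of_closedBall_subset (hu : ‖u‖ = 1) (hC : IsCompact C) (hr : 0 ≤ r)
    (hCr : Metric.closedBall 0 r ⊆ C) : r ≤ maxC C u := by
  have hmem : r • u ∈ C := hCr (by simp [norm_smul, hu, abs_of_nonneg hr])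
  simpa [real_inner_smul_right, real_inner_self_eq_norm_sq, hu]
    using inner_le_maxC (u := u) hC hmem

lemma minC_le_neg_of_closedBall_subset (hu : ‖u‖ = 1) (hC : IsCompact C) (hr : 0 ≤ r)
    (hCr : Metric.closedBall 0 r ⊆ C) : minC C u ≤ -r := by
  have hmem : (-r) • u ∈ C := hCr (by simp [norm_smul, hu, abs_of_nonneg hr])
  simpa [real_inner_smul_right, real_inner_self_eq_norm_sq, hu]
    using minC_le_inner (u := u) hC hmem

end Compact

lemma abs_inner_sub_mul_inner_le {E : Type*} [NormedAddCommGroup E] [InnerProductSpace ℝ E]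
    {c s : ℝ} (hs : 0 ≤ s) (hcs : c ^ 2 + s ^ 2 = 1) {v w x : E} (hv : ‖v‖ = 1)
    (hw : ‖w‖ = 1) (hvw : ⟪v, w⟫ = c) (hx : ‖x‖ ≤ 1) :
    |⟪w, x⟫ - c * ⟪v, x⟫| ≤ s * √(1 - ⟪v, x⟫ ^ 2) := by
  set p := ⟪v, x⟫
  have hwv : ⟪w, v⟫ = c := by rw [real_inner_comm, hvw]
  have hxv : ⟪x, v⟫ = p := real_inner_comm _ _
  have hinner : ⟪w - c • v, x - p • v⟫ = ⟪w, x⟫ - c * p := by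
    simp only [inner_sub_left, inner_sub_right, real_inner_smul_left, real_inner_smul_right,
      hwv, real_inner_self_eq_norm_sq, hv]
    ring
  have hw' : ‖w - c • v‖ = s := by
    rw [← pow_left_inj₀ (norm_nonneg _) hs two_ne_zero, norm_sub_sq_real, real_inner_smul_right,
      hwv, norm_smul, hv, hw, Real.norm_eq_abs, mul_one, sq_abs]
    linarith
  have hp : p ^ 2 ≤ 1 := (sq_le_one_iff_abs_le_one _).2
    ((abs_real_inner_le_norm v x).trans (by rw [hv, one_mul]; exact hx))
  have hx' : ‖x - p • v‖ ≤ √(1 - p ^ 2) := by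
    rw [Real.le_sqrt (norm_nonneg _) (by linarith), norm_sub_sq_real, real_inner_smul_right, hxv,
      norm_smul, hv, Real.norm_eq_abs, mul_one, sq_abs]
    nlinarith [norm_nonneg x]
  calc |⟪w, x⟫ - c * p| = |⟪w - c • v, x - p • v⟫| := by rw [hinner]
    _ ≤ ‖w - c • v‖ * ‖x - p • v‖ := abs_real_inner_le_norm _ _
    _ ≤ s * √(1 - p ^ 2) := by rw [hw']; exact mul_le_mul_of_nonneg_left hx' hs

lemma cos_mul_add_sin_mul_sqrt_eq_cos_arccos_sub {α p : ℝ} (hp₁ : -1 ≤ p) (hp₂ : p ≤ 1) :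
    Real.cos α * p + Real.sin α * √(1 - p ^ 2) = Real.cos (Real.arccos p - α) := by
  rw [Real.cos_sub, Real.cos_arccos hp₁ hp₂, Real.sin_arccos]
  ring

lemma cos_mul_add_sin_mul_sqrt_le {α p t : ℝ} (hα₀ : 0 ≤ α) (hαπ : α ≤ Real.pi)
    (hp : -1 ≤ p) (hpt : p ≤ t) (ht : t ≤ Real.cos α) :
    Real.cos α * p + Real.sin α * √(1 - p ^ 2) ≤
      Real.cos α * t + Real.sin α * √(1 - t ^ 2) := by
  have ht₁ : t ≤ 1 := ht.trans (Real.cos_le_one α)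
  rw [cos_mul_add_sin_mul_sqrt_eq_cos_arccos_sub hp (hpt.trans ht₁),
    cos_mul_add_sin_mul_sqrt_eq_cos_arccos_sub (hp.trans hpt) ht₁]
  have hαt : α ≤ Real.arccos t := by
    simpa [Real.arccos_cos hα₀ hαπ] using Real.arccos_le_arccos ht
  apply Real.cos_le_cos_of_nonneg_of_le_pi (by linarith)
    (by linarith [Real.arccos_le_pi p])
  linarith [Real.arccos_le_arccos hpt]

lemma sub_div_add_le_sub_div_add {f r M U : ℝ} (hf : 0 ≤ f + r) (hM : 0 < M + r)
    (hMU : M ≤ U) :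
    (M - f) / (M + r) ≤ (U - f) / (U + r) := by
  rw [div_le_div_iff₀ hM (by linarith)]
  nlinarith

section Bound

variable {c s r ρ : ℝ}

lemma two_mul_sq_div_one_add_le (hcs : c ^ 2 + s ^ 2 = 1) (hs : 0 ≤ s) (hr : 0 < r)
    (hrc : r ≤ c) (hsρ : s ≤ ρ) :
    2 * s ^ 2 / (1 + r) ≤ 2 * ρ * s / (r * (1 + c) + ρ * s) := by
  have hρ : 0 ≤ ρ := hs.trans hsρ
  have key : s * (r * (1 + c) + ρ * s) ≤ ρ * (1 + r) := by
    have h₁ : s * r ≤ ρ * r := mul_le_mul_of_nonneg_right hsρ hr.le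
    have h₂ : s * r * c ≤ ρ * c * c :=
      mul_le_mul_of_nonneg_right (mul_le_mul hsρ hrc hr.le hρ) (hr.le.trans hrc)
    linear_combination h₁ + h₂ + ρ * hcs
  rw [div_le_div_iff₀ (by positivity) (by nlinarith)]
  nlinarith

lemma two_mul_mul_div_le {t q : ℝ} (hs : 0 ≤ s) (hr : 0 < r) (hc : 0 ≤ c) (hrt : r ≤ t)
    (hq : 0 ≤ q) (hqρ : q ≤ ρ) :
    2 * s * q / (c * t + s * q + r) ≤ 2 * ρ * s / (r * (1 + c) + ρ * s) := by
  have hρ : 0 ≤ ρ := hq.trans hqρ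
  have key : q * (r * (1 + c) + ρ * s) ≤ ρ * (c * t + s * q + r) := by
    have h₁ : q * r ≤ ρ * r := mul_le_mul_of_nonneg_right hqρ hr.le
    have h₂ : q * r * c ≤ ρ * t * c :=
      mul_le_mul_of_nonneg_right (mul_le_mul hqρ hrt hr.le hρ) hc
    linear_combination h₁ + h₂
  rw [div_le_div_iff₀ (by nlinarith) (by positivity)]
  nlinarith

end Bound

section UnitBall

variable {n : ℕ} {C : Set (EuclideanSpace ℝ (Fin n))} {v w x : EuclideanSpace ℝ (Fin n)}
  {α : ℝ}

lemma cos_mul_sub_sin_mul_le_inner_of_inner_eq_maxC (hα₀ : 0 ≤ α) (hαπ : α ≤ Real.pi)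
    (hC1 : C ⊆ Metric.closedBall 0 1) (hv : ‖v‖ = 1) (hw : ‖w‖ = 1)
    (hangle : ⟪v, w⟫ = Real.cos α) (hx : x ∈ C) (hxv : ⟪v, x⟫ = maxC C v) :
    Real.cos α * maxC C v - Real.sin α * √(1 - maxC C v ^ 2) ≤ ⟪w, x⟫ := by
  have h := abs_inner_sub_mul_inner_le (Real.sin_nonneg_of_nonneg_of_le_pi hα₀ hαπ)
    (Real.cos_sq_add_sin_sq α) hv hw hangle (mem_closedBall_zero_iff.1 (hC1 hx))
  rw [hxv] at h
  linarith [(abs_le.1 h).1]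

lemma maxC_le_cos_mul_add_sin_mul (hα₀ : 0 ≤ α) (hαπ : α ≤ Real.pi) (hC : IsCompact C)
    (hne : C.Nonempty) (hC1 : C ⊆ Metric.closedBall 0 1) (hv : ‖v‖ = 1) (hw : ‖w‖ = 1)
    (hangle : ⟪v, w⟫ = Real.cos α) (ht : maxC C v ≤ Real.cos α) :
    maxC C w ≤ Real.cos α * maxC C v + Real.sin α * √(1 - maxC C v ^ 2) := by
  refine maxC_le hne fun x hx => ?_
  have hx1 : ‖x‖ ≤ 1 := mem_closedBall_zero_iff.1 (hC1 hx)
  have h := abs_inner_sub_mul_inner_le (Real.sin_nonneg_of_nonneg_of_le_pi hα₀ hαπ)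
    (Real.cos_sq_add_sin_sq α) hv hw hangle hx1
  have hvx : |⟪v, x⟫| ≤ 1 := (abs_real_inner_le_norm v x).trans (by rw [hv, one_mul]; exact hx1)
  linarith [(abs_le.1 h).2, cos_mul_add_sin_mul_sqrt_le hα₀ hαπ (abs_le.1 hvx).1
    (inner_le_maxC hC hx) ht]

end UnitBall

theorem slosC_le_of_norm_eq_one {n : ℕ} {α r ρ : ℝ} (hα0 : 0 < α) (hα1 : α < Real.pi / 2)
    (hr0 : 0 < r) (hsr : Real.sin α ≤ r) (hrc : r ≤ Real.cos α)
    (hρ : ρ = √(1 - r ^ 2)) {C : Set (EuclideanSpace ℝ (Fin n))} (hC : IsCompact C)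
    (hCr : Metric.closedBall 0 r ⊆ C) (hC1 : C ⊆ Metric.closedBall 0 1)
    {v w : EuclideanSpace ℝ (Fin n)} (hv : ‖v‖ = 1) (hw : ‖w‖ = 1)
    (hangle : ⟪v, w⟫ = Real.cos α) :
    slosC C v w ≤ 2 * ρ * Real.sin α / (r * (1 + Real.cos α) + ρ * Real.sin α) := by
  set c := Real.cos α
  set s := Real.sin α
  have hs : 0 < s := Real.sin_pos_of_pos_of_lt_pi hα0 (by linarith [Real.pi_pos])
  have hcs : c ^ 2 + s ^ 2 = 1 := Real.cos_sq_add_sin_sq α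
  have hsρ : s ≤ ρ := by
    rw [hρ, Real.le_sqrt hs.le (by nlinarith)]
    nlinarith
  have hρc : ρ ≤ c := by
    rw [hρ, Real.sqrt_le_left (hr0.le.trans hrc)]
    nlinarith
  have hα₀ : 0 ≤ α := hα0.le
  have hαπ : α ≤ Real.pi := by linarith [Real.pi_pos]
  have hne : C.Nonempty := ⟨0, hCr (Metric.mem_closedBall_self hr0.le)⟩
  set t := maxC C v
  set q := √(1 - t ^ 2)
  have hrt : r ≤ t := le_maxC_of_closedBall_subset hv hC hr0.le hCr
  have hqρ : q ≤ ρ := hρ ▸ Real.sqrt_le_sqrt (by nlinarith)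
  have hfr : 0 ≤ c * t - s * q + r := by
    nlinarith [mul_le_mul hsr (hqρ.trans hρc) (Real.sqrt_nonneg _) hr0.le]
  have hMr : r ≤ maxC C w := le_maxC_of_closedBall_subset hw hC hr0.le hCr
  refine (slosC_le_of_face_bound hC hne
    (fun x hx => cos_mul_sub_sin_mul_le_inner_of_inner_eq_maxC hα₀ hαπ hC1 hv hw hangle hx)
    (minC_le_neg_of_closedBall_subset hw hC hr0.le hCr) (by linarith)).trans ?_
  rcases le_or_gt c t with hct | htc
  · have hqs : q ≤ s := by
      rw [Real.sqrt_le_left hs.le]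
      nlinarith
    calc _ ≤ (1 - (c * t - s * q)) / (1 + r) :=
          sub_div_add_le_sub_div_add hfr (by linarith) (hw ▸ maxC_le_norm hne hC1)
      _ ≤ 2 * s ^ 2 / (1 + r) := by gcongr; nlinarith
      _ ≤ _ := two_mul_sq_div_one_add_le hcs hs.le hr0 hrc hsρ
  · calc _ ≤ (c * t + s * q - (c * t - s * q)) / (c * t + s * q + r) :=
          sub_div_add_le_sub_div_add hfr (by linarith)
            (maxC_le_cos_mul_add_sin_mul hα₀ hαπ hC hne hC1 hv hw hangle htc.le)
      _ = 2 * s * q / (c * t + s * q + r) := by ring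
      _ ≤ _ := two_mul_mul_div_le hs.le hr0 (hr0.le.trans hrc) hrt (Real.sqrt_nonneg _) hqρ

theorem stmt5_general (n : ℕ) (α r ρ : ℝ) (hα0 : 0 < α) (hα1 : α < Real.pi / 2)
    (hr0 : 0 < r) (hsr : Real.sin α ≤ r) (hrc : r ≤ Real.cos α)
    (hρ : ρ = Real.sqrt (1 - r ^ 2))
    (C : Set (EuclideanSpace ℝ (Fin n))) (hC : IsCompact C)
    (hCr : Metric.closedBall 0 r ⊆ C) (hC1 : C ⊆ Metric.closedBall 0 1)
    (v w : EuclideanSpace ℝ (Fin n)) (hv : v ≠ 0) (hw : w ≠ 0)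
    (hangle : ⟪v, w⟫ = ‖v‖ * ‖w‖ * Real.cos α) :
    slosC C v w ≤ 2 * ρ * Real.sin α
      / (r * (1 + Real.cos α) + ρ * Real.sin α) := by
  have hv0 : 0 < ‖v‖ := norm_pos_iff.2 hv
  have hw0 : 0 < ‖w‖ := norm_pos_iff.2 hw
  rw [← slosC_smul C v w (inv_pos.2 hv0) (inv_pos.2 hw0)]
  refine slosC_le_of_norm_eq_one hα0 hα1 hr0 hsr hrc hρ hC hCr hC1 ?_ ?_ ?_
  · rw [norm_smul, norm_inv, norm_norm, inv_mul_cancel₀ hv0.ne']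
  · rw [norm_smul, norm_inv, norm_norm, inv_mul_cancel₀ hw0.ne']
  · rw [real_inner_smul_left, real_inner_smul_right, hangle]
    field_simp

theorem stmt5 (n : ℕ) (α r ρ : ℝ) (hα0 : 0 < α) (hα1 : α < Real.pi / 2)
    (hr0 : 0 < r) (hr1 : r < 1) (hsr : Real.sin α ≤ r) (hrc : r ≤ Real.cos α)
    (hρ : ρ = Real.sqrt (1 - r ^ 2))
    (C : Set (EuclideanSpace ℝ (Fin n))) (hC : IsCompact C)
    (hCr : Metric.closedBall 0 r ⊆ C) (hC1 : C ⊆ Metric.closedBall 0 1)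
    (v w : EuclideanSpace ℝ (Fin n)) (hv : v ≠ 0) (hw : w ≠ 0)
    (hangle : ⟪v, w⟫ = ‖v‖ * ‖w‖ * Real.cos α) :
    slosC C v w ≤ 2 * ρ * Real.sin α
      / (r * (1 + Real.cos α) + ρ * Real.sin α) :=
  stmt5_general n α r ρ hα0 hα1 hr0 hsr hrc hρ C hC hCr hC1 v w hv hw hangle
end

section
/- Let 0 < α < π/2 and 0 < r < 1 with sin α ≤ r ≤ cos α, ρ := √(1 - r²). Let C ⊆ R² be the convex hull of {(-ρ, r), (ρ, r)} ∪ rB², v = (0,1), w = (sin α, cos α). Then los(v,w) = 2ρ sin α and ran(w) = r(1 + cos α) + ρ sin α, so slos(v,w) = 2ρ sin α / (r(1 + cos α) + ρ sin α) (i.e., the worst-case bound is tight). -/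
open scoped RealInnerProductSpace

/-
The generators of `C` lie in the unit disc, hence so does `C`, and the face of `C` in direction
`v = (0,1)` is the chord `[(-ρ, r), (ρ, r)]` cut out of the line `y = r` by the unit circle; its
width in direction `w` is `2ρ sin α`. Support values of a convex hull are extremes over the
generators: in direction `w` the maximum `ρ sin α + r cos α` is attained at `(ρ, r)` (the disc only
reaches `r`, and `r ≤ ρ sin α + r cos α` since `sin α ≤ ρ`), and the minimum `-r` at `-r w` (the
points `(±ρ, r)` lie higher since `ρ sin α ≤ r (1 + cos α)`).
-/

open Metric Real

section InnerProductSpace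

variable {E : Type*} [NormedAddCommGroup E] [InnerProductSpace ℝ E] {S : Set E} {u x : E} {c : ℝ}

theorem inner_le_of_mem_convexHull (h : ∀ y ∈ S, ⟪u, y⟫ ≤ c) (hx : x ∈ convexHull ℝ S) :
    ⟪u, x⟫ ≤ c :=
  convexHull_min h (convex_halfSpace_le (innerₛₗ ℝ u).isLinear c) hx

theorem le_inner_of_mem_convexHull (h : ∀ y ∈ S, c ≤ ⟪u, y⟫) (hx : x ∈ convexHull ℝ S) :
    c ≤ ⟪u, x⟫ :=
  convexHull_min h (convex_halfSpace_ge (innerₛₗ ℝ u).isLinear c) hx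

theorem abs_inner_le_of_mem_closedBall (hu : ‖u‖ = 1) (hx : x ∈ closedBall 0 c) :
    |⟪u, x⟫| ≤ c :=
  (abs_real_inner_le_norm u x).trans (by rw [hu, one_mul]; exact mem_closedBall_zero_iff.mp hx)

end InnerProductSpace

section SupportFunction

variable {n : ℕ} {S : Set (EuclideanSpace ℝ (Fin n))} {u x₀ : EuclideanSpace ℝ (Fin n)} {c : ℝ}

theorem maxC_convexHull_eq (h : ∀ y ∈ S, ⟪u, y⟫ ≤ c) (hx₀ : x₀ ∈ S) (hc : ⟪u, x₀⟫ = c) :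
    maxC (convexHull ℝ S) u = c :=
  IsGreatest.csSup_eq ⟨⟨x₀, subset_convexHull ℝ S hx₀, hc⟩,
    by rintro _ ⟨x, hx, rfl⟩; exact inner_le_of_mem_convexHull h hx⟩

theorem minC_convexHull_eq (h : ∀ y ∈ S, c ≤ ⟪u, y⟫) (hx₀ : x₀ ∈ S) (hc : ⟪u, x₀⟫ = c) :
    minC (convexHull ℝ S) u = c :=
  IsLeast.csInf_eq ⟨⟨x₀, subset_convexHull ℝ S hx₀, hc⟩,
    by rintro _ ⟨x, hx, rfl⟩; exact le_inner_of_mem_convexHull h hx⟩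

end SupportFunction

theorem EuclideanSpace.inner_toLp_fin_two (a b : ℝ) (x : EuclideanSpace ℝ (Fin 2)) :
    ⟪!₂[a, b], x⟫ = a * x 0 + b * x 1 := by
  simp [PiLp.inner_apply, Fin.sum_univ_two, mul_comm]

theorem EuclideanSpace.norm_toLp_fin_two (a b : ℝ) : ‖!₂[a, b]‖ = √(a ^ 2 + b ^ 2) := by
  simp [EuclideanSpace.norm_eq, Fin.sum_univ_two]

open EuclideanSpace

noncomputable def capHull (r : ℝ) : Set (EuclideanSpace ℝ (Fin 2)) :=
  convexHull ℝ ({!₂[-√(1 - r ^ 2), r], !₂[√(1 - r ^ 2), r]} ∪ closedBall 0 r)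

section CapHull

variable {r a b : ℝ}

theorem capHull_subset_closedBall_one (hr0 : 0 ≤ r) (hr1 : r ≤ 1) :
    capHull r ⊆ closedBall 0 1 := by
  have hnorm : √(1 - r ^ 2) ^ 2 + r ^ 2 = 1 := by rw [sq_sqrt (by nlinarith)]; ring
  refine convexHull_min ?_ (convex_closedBall 0 1)
  rintro y ((rfl | rfl) | hy)
  · simp [norm_toLp_fin_two, hnorm]
  · simp [norm_toLp_fin_two, hnorm]
  · exact closedBall_subset_closedBall hr1 hy

theorem maxC_capHull_up : maxC (capHull r) !₂[0, 1] = r := by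
  refine maxC_convexHull_eq (x₀ := !₂[√(1 - r ^ 2), r]) ?_ (by simp) (by simp [inner_toLp_fin_two])
  rintro y ((rfl | rfl) | hy)
  · simp [inner_toLp_fin_two]
  · simp [inner_toLp_fin_two]
  · exact (le_abs_self _).trans (abs_inner_le_of_mem_closedBall (by simp [norm_toLp_fin_two]) hy)

theorem maxC_capHull (hab : a ^ 2 + b ^ 2 = 1) (ha : 0 ≤ a)
    (hr : r ≤ √(1 - r ^ 2) * a + r * b) :
    maxC (capHull r) !₂[a, b] = √(1 - r ^ 2) * a + r * b := by
  refine maxC_convexHull_eq (x₀ := !₂[√(1 - r ^ 2), r]) ?_ (by simp)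
    (by simp [inner_toLp_fin_two]; ring)
  rintro y ((rfl | rfl) | hy)
  · simp [inner_toLp_fin_two]
    nlinarith [sqrt_nonneg (1 - r ^ 2)]
  · simp [inner_toLp_fin_two]
    linarith
  · refine ((le_abs_self _).trans (abs_inner_le_of_mem_closedBall ?_ hy)).trans hr
    rw [norm_toLp_fin_two, hab, sqrt_one]

theorem minC_capHull (hab : a ^ 2 + b ^ 2 = 1) (ha : 0 ≤ a) (hr : 0 ≤ r)
    (hp : √(1 - r ^ 2) * a ≤ r * (1 + b)) :
    minC (capHull r) !₂[a, b] = -r := by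
  have hu : ‖!₂[a, b]‖ = 1 := by rw [norm_toLp_fin_two, hab, sqrt_one]
  refine minC_convexHull_eq (x₀ := -r • !₂[a, b]) ?_ ?_ ?_
  · rintro y ((rfl | rfl) | hy)
    · simp [inner_toLp_fin_two]
      nlinarith
    · simp [inner_toLp_fin_two]
      nlinarith [sqrt_nonneg (1 - r ^ 2)]
    · exact neg_le_of_abs_le (abs_inner_le_of_mem_closedBall hu hy)
  · right
    simp [norm_smul, hu, abs_of_nonneg hr]
  · rw [real_inner_smul_right, real_inner_self_eq_norm_sq, hu]
    ring

theorem sInf_inner_capHull_top (hr0 : 0 ≤ r) (hr1 : r ≤ 1) (ha : 0 ≤ a) :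
    sInf ((fun x => ⟪!₂[a, b], x⟫) '' {x ∈ capHull r | ⟪!₂[0, 1], x⟫ = r}) =
      r * b - √(1 - r ^ 2) * a := by
  refine IsLeast.csInf_eq ⟨⟨!₂[-√(1 - r ^ 2), r],
    ⟨subset_convexHull ℝ _ (by simp), by simp [inner_toLp_fin_two]⟩,
    by simp [inner_toLp_fin_two]; ring⟩, ?_⟩
  rintro _ ⟨x, ⟨hx, hx1⟩, rfl⟩
  simp only [inner_toLp_fin_two, zero_mul, zero_add, one_mul] at hx1 ⊢
  have hnorm := mem_closedBall_zero_iff.mp (capHull_subset_closedBall_one hr0 hr1 hx)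
  have hsq : x 0 ^ 2 + x 1 ^ 2 ≤ 1 := by
    rw [← Fin.sum_univ_two (fun i => x i ^ 2), ← real_norm_sq_eq]
    nlinarith [norm_nonneg x]
  have hx0 : -√(1 - r ^ 2) ≤ x 0 := neg_sqrt_le_of_sq_le (by rw [hx1] at hsq; linarith)
  rw [hx1]
  nlinarith

theorem losC_capHull (hr0 : 0 ≤ r) (hr1 : r ≤ 1) (hab : a ^ 2 + b ^ 2 = 1) (ha : 0 ≤ a)
    (hr : r ≤ √(1 - r ^ 2) * a + r * b) :
    losC (capHull r) !₂[0, 1] !₂[a, b] = 2 * √(1 - r ^ 2) * a := by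
  rw [losC, maxC_capHull_up, maxC_capHull hab ha hr, sInf_inner_capHull_top hr0 hr1 ha]
  ring

theorem ranC_capHull (hr0 : 0 ≤ r) (hab : a ^ 2 + b ^ 2 = 1) (ha : 0 ≤ a)
    (hr : r ≤ √(1 - r ^ 2) * a + r * b) (hp : √(1 - r ^ 2) * a ≤ r * (1 + b)) :
    ranC (capHull r) !₂[a, b] = r * (1 + b) + √(1 - r ^ 2) * a := by
  rw [ranC, maxC_capHull hab ha hr, minC_capHull hab ha hr0 hp]
  ring

end CapHull

theorem stmt6 (α r ρ : ℝ) (hα0 : 0 < α) (hα1 : α < Real.pi / 2)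
    (hr0 : 0 < r) (hr1 : r < 1) (hsr : Real.sin α ≤ r) (hrc : r ≤ Real.cos α)
    (hρ : ρ = Real.sqrt (1 - r ^ 2))
    (p q v w : EuclideanSpace ℝ (Fin 2))
    (hp : p = (WithLp.equiv 2 (Fin 2 → ℝ)).symm ![-ρ, r])
    (hq : q = (WithLp.equiv 2 (Fin 2 → ℝ)).symm ![ρ, r])
    (hv : v = (WithLp.equiv 2 (Fin 2 → ℝ)).symm ![0, 1])
    (hw : w = (WithLp.equiv 2 (Fin 2 → ℝ)).symm ![Real.sin α, Real.cos α])
    (C : Set (EuclideanSpace ℝ (Fin 2)))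
    (hC : C = convexHull ℝ ({p, q} ∪ Metric.closedBall 0 r)) :
    losC C v w = 2 * ρ * Real.sin α ∧
    ranC C w = r * (1 + Real.cos α) + ρ * Real.sin α ∧
    slosC C v w = 2 * ρ * Real.sin α
      / (r * (1 + Real.cos α) + ρ * Real.sin α) := by
  have hs : 0 ≤ sin α := (sin_pos_of_pos_of_lt_pi hα0 (by linarith [pi_pos])).le
  have hc : 0 ≤ cos α := hr0.le.trans hrc
  have hsc := sin_sq_add_cos_sq α
  have hsρ : sin α ≤ √(1 - r ^ 2) := (le_sqrt hs (by nlinarith)).mpr (by nlinarith)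
  have hρ1 : √(1 - r ^ 2) ≤ 1 := sqrt_le_one.mpr (by nlinarith)
  have hmax : r ≤ √(1 - r ^ 2) * sin α + r * cos α := by
    have : r * (1 - cos α) ≤ sin α ^ 2 := by nlinarith [cos_le_one α]
    nlinarith
  have hmin : √(1 - r ^ 2) * sin α ≤ r * (1 + cos α) := by nlinarith
  simp only [WithLp.equiv_symm_apply] at hp hq hv hw
  subst hρ hp hq hv hw
  obtain rfl : C = capHull r := hC
  have hlos := losC_capHull hr0.le hr1.le hsc hs hmax
  have hran := ranC_capHull hr0.le hsc hs hmax hmin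
  exact ⟨hlos, hran, by rw [slosC, hlos, hran]⟩
end

section
/- For real s, σ, r with sin α ≤ r ≤ s ≤ cos α, σ = √(1 - s²), ρ = √(1 - r²), and 0 < α < π/2: 2σ sin α / (σ sin α + s cos α + r) ≤ 2ρ sin α / (ρ sin α + r cos α + r). -/
open Real

lemma sqrt_one_sub_sq_le_of_le {r s : ℝ} (hr : 0 ≤ r) (hrs : r ≤ s) :
    √(1 - s ^ 2) ≤ √(1 - r ^ 2) :=
  sqrt_le_sqrt (by nlinarith)

/-- After clearing denominators and cancelling `2 σ ρ a²`, the claim is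
`σ (r c + r) ≤ ρ (s c + r)`, which is monotone in each factor. -/
lemma two_mul_div_add_le_two_mul_div_add {a c r s σ ρ : ℝ} (ha : 0 ≤ a) (hc : 0 ≤ c)
    (hr : 0 < r) (hrs : r ≤ s) (hσ : 0 ≤ σ) (hσρ : σ ≤ ρ) :
    2 * σ * a / (σ * a + s * c + r) ≤ 2 * ρ * a / (ρ * a + r * c + r) := by
  have hρ : 0 ≤ ρ := hσ.trans hσρ
  have hs : 0 ≤ s := hr.le.trans hrs
  rw [div_le_div_iff₀ (by positivity) (by positivity)]
  have key : σ * (r * c + r) ≤ ρ * (s * c + r) :=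
    mul_le_mul hσρ (by gcongr) (by positivity) hρ
  nlinarith [mul_le_mul_of_nonneg_left key ha]

theorem stmt8_general (α r s σ ρ : ℝ) (hα0 : 0 < α) (hα1 : α < Real.pi / 2)
    (hsr : Real.sin α ≤ r) (hrs : r ≤ s)
    (hσ : σ = Real.sqrt (1 - s ^ 2)) (hρ : ρ = Real.sqrt (1 - r ^ 2)) :
    2 * σ * Real.sin α / (σ * Real.sin α + s * Real.cos α + r)
      ≤ 2 * ρ * Real.sin α / (ρ * Real.sin α + r * Real.cos α + r) := by
  have hsin : 0 < sin α := sin_pos_of_pos_of_lt_pi hα0 (by linarith [pi_pos])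
  have hcos : 0 ≤ cos α := cos_nonneg_of_mem_Icc ⟨by linarith, hα1.le⟩
  have hr : 0 < r := hsin.trans_le hsr
  subst hσ hρ
  exact two_mul_div_add_le_two_mul_div_add hsin.le hcos hr hrs (sqrt_nonneg _)
    (sqrt_one_sub_sq_le_of_le hr.le hrs)

theorem stmt8 (α r s σ ρ : ℝ) (hα0 : 0 < α) (hα1 : α < Real.pi / 2)
    (hsr : Real.sin α ≤ r) (hrs : r ≤ s) (hsc : s ≤ Real.cos α)
    (hσ : σ = Real.sqrt (1 - s ^ 2)) (hρ : ρ = Real.sqrt (1 - r ^ 2)) :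
    2 * σ * Real.sin α / (σ * Real.sin α + s * Real.cos α + r)
      ≤ 2 * ρ * Real.sin α / (ρ * Real.sin α + r * Real.cos α + r) :=
  stmt8_general α r s σ ρ hα0 hα1 hsr hrs hσ hρ
end
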